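/- arXiv:2502.17697 — 3 statements merged into one kernel-verified Lean document; each statement's English description precedes it below -/
import Mathlib

section
/- Let W₁ be block-positive on product states on a bipartite system A₁A₂ (i.e. tr(W₁(ρ⊗σ)) ≥ 0 for all PSD ρ,σ) and W₂ block-positive on product states on B₁B₂, and let τ be a PSD operator on A₂⊗B₂. Then the operator 𝒲 = tr_{A₂B₂}((W₁⊗W₂)·(𝟙_{A₁B₁}⊗τ)) satisfies tr(𝒲·(ρ_A⊗ρ_B)) ≥ 0 for all PSD operators ρ_A on A₁ and ρ_B on B₁. -/
open Matrix Kronecker BigOperators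
open scoped ComplexOrder

/-- A nonnegative quadratic form over `ℂ` implies positive semidefiniteness. -/
theorem aux_psd_of_quadform {n : Type*} [Fintype n] [DecidableEq n] (M : Matrix n n ℂ)
    (h : ∀ x : n → ℂ, 0 ≤ star x ⬝ᵥ M *ᵥ x) : M.PosSemidef := by
  have hstar : ∀ x : n → ℂ, star x ⬝ᵥ Mᴴ *ᵥ x = star x ⬝ᵥ M *ᵥ x := by
    intro x
    have h0 := h x
    have hre : star (star x ⬝ᵥ M *ᵥ x) = star x ⬝ᵥ M *ᵥ x := by
      rw [Complex.nonneg_iff] at h0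
      exact Complex.conj_eq_iff_im.mpr h0.2.symm
    calc star x ⬝ᵥ Mᴴ *ᵥ x = star x ᵥ* Mᴴ ⬝ᵥ x := by rw [dotProduct_mulVec]
      _ = star (M *ᵥ x) ⬝ᵥ x := by rw [star_mulVec]
      _ = star (star x ⬝ᵥ M *ᵥ x) := by
          rw [star_dotProduct]
      _ = _ := hre
  set N := M - Mᴴ with hN
  have hq : ∀ x : n → ℂ, star x ⬝ᵥ N *ᵥ x = 0 := by
    intro x
    simp only [hN, sub_mulVec, dotProduct_sub, hstar x, sub_self]
  have key : ∀ u v : n → ℂ, star u ⬝ᵥ N *ᵥ v = 0 := by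
    intro u v
    have h1 := hq (u + v)
    have h2 := hq (u + Complex.I • v)
    simp only [star_add, star_smul, mulVec_add, mulVec_smul, dotProduct_add,
      add_dotProduct, dotProduct_smul, smul_dotProduct, hq u, hq v] at h1 h2
    simp only [smul_eq_mul, Complex.star_def, Complex.conj_I] at h2
    have h3 : star u ⬝ᵥ N *ᵥ v + star v ⬝ᵥ N *ᵥ u = 0 := by linear_combination h1
    have h4 : star u ⬝ᵥ N *ᵥ v - star v ⬝ᵥ N *ᵥ u = 0 := by
      linear_combination (-Complex.I) * h2 +
        (star u ⬝ᵥ N *ᵥ v - star v ⬝ᵥ N *ᵥ u) * Complex.I_sq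
    linear_combination (h3 + h4) / 2
  have hNzero : M - Mᴴ = 0 := by
    ext a c
    have := key (Pi.single a 1) (Pi.single c 1)
    simpa [hN, dotProduct, mulVec, Pi.single_apply, Finset.sum_ite_eq, Finset.sum_ite_eq'] using this
  exact Matrix.PosSemidef.of_dotProduct_mulVec_nonneg (sub_eq_zero.mp hNzero).symm h

open scoped MatrixOrder in
theorem aux_psd_eq {n : Type*} [Fintype n] [DecidableEq n] {P : Matrix n n ℂ}
    (hP : P.PosSemidef) : ∃ C : Matrix n n ℂ, P = Cᴴ * C := by
  obtain ⟨X, hX, -, hXX⟩ := CFC.exists_sqrt_of_isSelfAdjoint_of_quasispectrumRestricts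
    (a := P) hP.isHermitian (QuasispectrumRestricts.nnreal_of_nonneg hP.nonneg)
  exact ⟨X, by rw [← hXX]; congr 1; exact hX.star_eq.symm⟩

/-- The trace of a product of two positive semidefinite matrices is nonnegative. -/
theorem aux_trace_mul_psd_nonneg {n : Type*} [Fintype n] [DecidableEq n] (P Q : Matrix n n ℂ)
    (hP : P.PosSemidef) (hQ : Q.PosSemidef) : 0 ≤ (P * Q).trace := by
  obtain ⟨C, rfl⟩ := aux_psd_eq hP
  obtain ⟨B, rfl⟩ := aux_psd_eq hQ
  have : (Cᴴ * C * (Bᴴ * B)).trace = ((C * Bᴴ)ᴴ * (C * Bᴴ)).trace := by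
    rw [conjTranspose_mul, conjTranspose_conjTranspose,
      show Cᴴ * C * (Bᴴ * B) = (Cᴴ * C * Bᴴ) * B by noncomm_ring,
      Matrix.trace_mul_comm,
      show B * (Cᴴ * C * Bᴴ) = B * Cᴴ * (C * Bᴴ) by noncomm_ring]
  rw [this]
  rw [Matrix.trace]
  apply Finset.sum_nonneg
  intro i _
  simp only [Matrix.diag_apply, Matrix.mul_apply, conjTranspose_apply]
  exact Finset.sum_nonneg fun j _ => star_mul_self_nonneg _

/-- The Kronecker product of positive semidefinite matrices is positive semidefinite. -/
theorem aux_kron_psd {m n : Type*} [Fintype m] [Fintype n] [DecidableEq m] [DecidableEq n]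
    (P : Matrix m m ℂ) (Q : Matrix n n ℂ) (hP : P.PosSemidef) (hQ : Q.PosSemidef) :
    (P ⊗ₖ Q).PosSemidef := by
  obtain ⟨C, rfl⟩ := aux_psd_eq hP
  obtain ⟨B, rfl⟩ := aux_psd_eq hQ
  rw [Matrix.mul_kronecker_mul]
  have : Cᴴ ⊗ₖ Bᴴ = (C ⊗ₖ B)ᴴ := by
    ext ⟨i, j⟩ ⟨k, l⟩
    simp [conjTranspose_apply, mul_comm]
  rw [this]
  exact Matrix.posSemidef_conjTranspose_mul_self _

/-- Rank-one matrices `u c * (u a)⋆` are positive semidefinite. -/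
theorem aux_rankone_psd {n : Type*} [Fintype n] [DecidableEq n] (u : n → ℂ) :
    (Matrix.of fun c a => u c * star (u a)).PosSemidef := by
  apply aux_psd_of_quadform
  intro x
  have : star x ⬝ᵥ (Matrix.of fun c a => u c * star (u a)) *ᵥ x
      = star (star u ⬝ᵥ x) * (star u ⬝ᵥ x) := by
    simp only [dotProduct, mulVec, Matrix.of_apply, Pi.star_apply, Finset.mul_sum,
      star_sum, star_mul', star_star, Finset.sum_mul]
    rw [Finset.sum_comm]
    apply Finset.sum_congr rfl; intro c _
    apply Finset.sum_congr rfl; intro a _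
    ring
  rw [this]
  exact star_mul_self_nonneg _

/-- The contracted witness matrix `Φ` is positive semidefinite, given block positivity. -/
theorem aux_phi_psd {A₁ A₂ : Type*} [Fintype A₁] [Fintype A₂] [DecidableEq A₁] [DecidableEq A₂]
    (W₁ : Matrix (A₁ × A₂) (A₁ × A₂) ℂ) (ρA : Matrix A₁ A₁ ℂ) (hρA : ρA.PosSemidef)
    (hW₁ : ∀ (ρ : Matrix A₁ A₁ ℂ) (σ : Matrix A₂ A₂ ℂ),
      ρ.PosSemidef → σ.PosSemidef → 0 ≤ Matrix.trace (W₁ * (ρ ⊗ₖ σ))) :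
    (Matrix.of fun a c => ∑ x₁ : A₁, ∑ y₁ : A₁, W₁ (x₁, a) (y₁, c) * ρA y₁ x₁).PosSemidef := by
  apply aux_psd_of_quadform
  intro u
  have key : star u ⬝ᵥ (Matrix.of fun a c =>
        ∑ x₁ : A₁, ∑ y₁ : A₁, W₁ (x₁, a) (y₁, c) * ρA y₁ x₁) *ᵥ u
      = Matrix.trace (W₁ * (ρA ⊗ₖ (Matrix.of fun c a => u c * star (u a)))) := by
    simp only [Matrix.trace, Matrix.diag_apply, Matrix.mul_apply, dotProduct, mulVec,
      Matrix.of_apply, Matrix.kroneckerMap_apply, Fintype.sum_prod_type, Pi.star_apply,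
      Finset.mul_sum, Finset.sum_mul]
    rw [← Fintype.sum_prod_type', ← Fintype.sum_prod_type', ← Fintype.sum_prod_type',
      ← Fintype.sum_prod_type', ← Fintype.sum_prod_type', ← Fintype.sum_prod_type']
    apply Fintype.sum_equiv (Equiv.mk
      (fun p : ((A₂ × A₂) × A₁) × A₁ => (((p.1.2, p.1.1.1), p.2), p.1.1.2))
      (fun q : ((A₁ × A₂) × A₁) × A₂ => (((q.1.1.2, q.2), q.1.1.1), q.1.2))
      (fun _ => rfl) (fun _ => rfl))
    intro p
    simp only [Equiv.coe_fn_mk]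
    ring
  rw [key]
  exact hW₁ ρA _ hρA (aux_rankone_psd u)

/-- Let W₁ be block-positive on A₁A₂, W₂ block-positive on B₁B₂, and τ PSD on A₂⊗B₂.
Then 𝒲 = tr_{A₂B₂}((W₁⊗W₂)·(𝟙_{A₁B₁}⊗τ)) has nonnegative expectation on all
products of PSD operators on A₁ and B₁. -/
theorem contracted_witness_nonneg
    {A₁ A₂ B₁ B₂ : Type*} [Fintype A₁] [Fintype A₂] [Fintype B₁] [Fintype B₂]
    [DecidableEq A₁] [DecidableEq A₂] [DecidableEq B₁] [DecidableEq B₂]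
    (W₁ : Matrix (A₁ × A₂) (A₁ × A₂) ℂ) (W₂ : Matrix (B₁ × B₂) (B₁ × B₂) ℂ)
    (τ : Matrix (A₂ × B₂) (A₂ × B₂) ℂ)
    (hW₁ : ∀ (ρ : Matrix A₁ A₁ ℂ) (σ : Matrix A₂ A₂ ℂ),
      ρ.PosSemidef → σ.PosSemidef → 0 ≤ Matrix.trace (W₁ * (ρ ⊗ₖ σ)))
    (hW₂ : ∀ (ρ : Matrix B₁ B₁ ℂ) (σ : Matrix B₂ B₂ ℂ),
      ρ.PosSemidef → σ.PosSemidef → 0 ≤ Matrix.trace (W₂ * (ρ ⊗ₖ σ)))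
    (hτ : τ.PosSemidef)
    (ρA : Matrix A₁ A₁ ℂ) (ρB : Matrix B₁ B₁ ℂ)
    (hρA : ρA.PosSemidef) (hρB : ρB.PosSemidef) :
    0 ≤ Matrix.trace ((Matrix.of fun (x : A₁ × B₁) (y : A₁ × B₁) =>
      ∑ a₂ : A₂, ∑ b₂ : B₂, ∑ c₂ : A₂, ∑ e₂ : B₂,
        W₁ (x.1, a₂) (y.1, c₂) * W₂ (x.2, b₂) (y.2, e₂) * τ (c₂, e₂) (a₂, b₂)
      : Matrix (A₁ × B₁) (A₁ × B₁) ℂ) * (ρA ⊗ₖ ρB)) := by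
  have hΦ₁ := aux_phi_psd W₁ ρA hρA hW₁
  have hΦ₂ := aux_phi_psd W₂ ρB hρB hW₂
  have key : Matrix.trace ((Matrix.of fun (x : A₁ × B₁) (y : A₁ × B₁) =>
      ∑ a₂ : A₂, ∑ b₂ : B₂, ∑ c₂ : A₂, ∑ e₂ : B₂,
        W₁ (x.1, a₂) (y.1, c₂) * W₂ (x.2, b₂) (y.2, e₂) * τ (c₂, e₂) (a₂, b₂)
      : Matrix (A₁ × B₁) (A₁ × B₁) ℂ) * (ρA ⊗ₖ ρB)) =
      Matrix.trace
        (((Matrix.of fun a c => ∑ x₁ : A₁, ∑ y₁ : A₁, W₁ (x₁, a) (y₁, c) * ρA y₁ x₁) ⊗ₖ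
          (Matrix.of fun b e => ∑ x₂ : B₁, ∑ y₂ : B₁, W₂ (x₂, b) (y₂, e) * ρB y₂ x₂)) * τ) := by
    simp only [Matrix.trace, Matrix.diag_apply, Matrix.mul_apply, Matrix.of_apply,
      Matrix.kroneckerMap_apply, Fintype.sum_prod_type, Finset.mul_sum, Finset.sum_mul]
    rw [← Fintype.sum_prod_type', ← Fintype.sum_prod_type', ← Fintype.sum_prod_type',
      ← Fintype.sum_prod_type', ← Fintype.sum_prod_type', ← Fintype.sum_prod_type',
      ← Fintype.sum_prod_type', ← Fintype.sum_prod_type', ← Fintype.sum_prod_type',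
      ← Fintype.sum_prod_type', ← Fintype.sum_prod_type', ← Fintype.sum_prod_type',
      ← Fintype.sum_prod_type', ← Fintype.sum_prod_type']
    apply Fintype.sum_equiv (Equiv.mk
      (fun p : ((((((A₁ × B₁) × A₁) × B₁) × A₂) × B₂) × A₂) × B₂ =>
        (((((((p.1.1.1.2, p.1.1.2), p.1.2), p.2), p.1.1.1.1.1.1.2), p.1.1.1.1.2),
          p.1.1.1.1.1.1.1), p.1.1.1.1.1.2))
      (fun q : ((((((A₂ × B₂) × A₂) × B₂) × B₁) × B₁) × A₁) × A₁ =>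
        (((((((q.1.2, q.1.1.1.2), q.2), q.1.1.2), q.1.1.1.1.1.1.1), q.1.1.1.1.1.1.2),
          q.1.1.1.1.1.2), q.1.1.1.1.2))
      (fun _ => rfl) (fun _ => rfl))
    intro p
    simp only [Equiv.coe_fn_mk]
    ring
  rw [key]
  exact aux_trace_mul_psd_nonneg _ _ (aux_kron_psd _ _ hΦ₁ hΦ₂) hτ
end

section
/- For the Werner state ρ_W = p·P_sym^{(d)}/d_s + (1−p)·P_asym^{(d)}/d_a on ℂ^d⊗ℂ^d and 𝒲 = (P_asym^{(d)}(Π⊗Π))_{A₁A₂} ⊗ (P_asym^{(d)}(Π⊗Π))_{B₁B₂} (with tensor factors arranged so that copies A₁B₁ and A₂B₂ pair systems of ρ_W), the partial contraction tr_{A₁B₁}(𝒲·(ρ_W ⊗ 𝟙_{A₂B₂})) is, up to a positive scalar, equal to p·P_sym^{(2)}/d_s' + (1−p)·P_asym^{(2)}/d_a' restricted to the two-qubit subspace, where d_s' and d_a' are appropriate positive normalizations (i.e. the contraction maps a two-qudit Werner state to a two-qubit Werner-form operator with the same mixing structure). -/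
open Matrix Kronecker BigOperators

/-- The swap operator η on ℂ^d ⊗ ℂ^d. -/
noncomputable def swapOp (d : ℕ) : Matrix (Fin d × Fin d) (Fin d × Fin d) ℂ :=
  Matrix.of fun p q => if p.1 = q.2 ∧ p.2 = q.1 then 1 else 0

/-- Symmetric projector P_sym^{(d)} = (𝟙 + η)/2. -/
noncomputable def symProj (d : ℕ) : Matrix (Fin d × Fin d) (Fin d × Fin d) ℂ :=
  (1 / 2 : ℂ) • (1 + swapOp d)

/-- Antisymmetric projector P_asym^{(d)} = (𝟙 − η)/2. -/
noncomputable def asymProj (d : ℕ) : Matrix (Fin d × Fin d) (Fin d × Fin d) ℂ :=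
  (1 / 2 : ℂ) • (1 - swapOp d)

/-- The two-dimensional local projector Π = |0⟩⟨0| + |1⟩⟨1| on ℂ^d. -/
noncomputable def projQubit (d : ℕ) : Matrix (Fin d) (Fin d) ℂ :=
  Matrix.of fun i j => if i = j ∧ (i : ℕ) < 2 then 1 else 0

/-- The two-qudit Werner state ρ_W = p·P_sym/d_s + (1−p)·P_asym/d_a. -/
noncomputable def wernerState (d : ℕ) (p : ℝ) : Matrix (Fin d × Fin d) (Fin d × Fin d) ℂ :=
  ((p : ℂ) / ((d : ℂ) * ((d : ℂ) + 1) / 2)) • symProj d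
    + ((1 - (p : ℂ)) / ((d : ℂ) * ((d : ℂ) - 1) / 2)) • asymProj d

/-- Local factor R = P_asym^{(d)}·(Π⊗Π) used in the witness 𝒲 = R_{A₁A₂} ⊗ R_{B₁B₂}. -/
noncomputable def wernerLocalR (d : ℕ) : Matrix (Fin d × Fin d) (Fin d × Fin d) ℂ :=
  asymProj d * (projQubit d ⊗ₖ projQubit d)

/-- The contraction tr_{A₁B₁}(𝒲·(ρ_W ⊗ 𝟙_{A₂B₂})), where 𝒲 = R_{A₁A₂} ⊗ R_{B₁B₂},
written directly as a matrix on the A₂B₂ system. -/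
noncomputable def wernerContraction (d : ℕ) (p : ℝ) :
    Matrix (Fin d × Fin d) (Fin d × Fin d) ℂ :=
  Matrix.of fun x y =>
    ∑ a₁ : Fin d, ∑ b₁ : Fin d, ∑ a₁' : Fin d, ∑ b₁' : Fin d,
      wernerLocalR d (a₁, x.1) (a₁', y.1) * wernerLocalR d (b₁, x.2) (b₁', y.2)
        * wernerState d p (a₁', b₁') (a₁, b₁)

/-- Triplet projector on the two-qubit subspace: (𝟙' + η')/2, 𝟙' = Π⊗Π, η' restricted swap. -/
noncomputable def symProj2 (d : ℕ) : Matrix (Fin d × Fin d) (Fin d × Fin d) ℂ :=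
  (1 / 2 : ℂ) • ((projQubit d ⊗ₖ projQubit d)
    + (projQubit d ⊗ₖ projQubit d) * swapOp d * (projQubit d ⊗ₖ projQubit d))

/-- Singlet projector on the two-qubit subspace: (𝟙' − η')/2. -/
noncomputable def asymProj2 (d : ℕ) : Matrix (Fin d × Fin d) (Fin d × Fin d) ℂ :=
  (1 / 2 : ℂ) • ((projQubit d ⊗ₖ projQubit d)
    - (projQubit d ⊗ₖ projQubit d) * swapOp d * (projQubit d ⊗ₖ projQubit d))


section WernerAux

open Finset

lemma projQubit_mul (d : ℕ) (i k : Fin d) :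
    ∑ j : Fin d, projQubit d i j * projQubit d j k = projQubit d i k := by
  simp only [projQubit, Matrix.of_apply, ite_and, ite_mul, zero_mul, Finset.sum_ite_eq',
    Finset.mem_univ, if_true]
  split_ifs <;> simp_all

lemma projQubit_trace (d : ℕ) (hd : 2 ≤ d) :
    ∑ a : Fin d, projQubit d a a = 2 := by
  have h : (Finset.univ.filter fun a : Fin d => (a : ℕ) < 2)
      = {⟨0, by omega⟩, ⟨1, by omega⟩} := by
    ext a; simp [Fin.ext_iff]; omega
  simp only [projQubit, Matrix.of_apply, true_and]
  rw [Finset.sum_boole, h]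
  rw [Finset.card_insert_of_notMem (by simp [Fin.ext_iff]), Finset.card_singleton]
  norm_num

lemma R_entry (d : ℕ) (a x a' y : Fin d) :
    wernerLocalR d (a, x) (a', y)
      = (1/2 : ℂ) * (projQubit d a a' * projQubit d x y
          - projQubit d x a' * projQubit d a y) := by
  simp only [wernerLocalR, Matrix.mul_apply, asymProj, swapOp, Matrix.smul_apply,
    Matrix.sub_apply, Matrix.one_apply, Matrix.of_apply, Matrix.kroneckerMap_apply,
    Fintype.sum_prod_type, Prod.mk.injEq, smul_eq_mul]
  simp only [ite_and, sub_mul, mul_ite, ite_mul, zero_mul, mul_zero, one_mul,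
    Finset.sum_sub_distrib, Finset.sum_ite_eq, Finset.sum_ite_eq', Finset.mem_univ, if_true,
    Finset.mul_sum, Finset.sum_ite_irrel, Finset.sum_const_zero]
  simp only [mul_sub, sub_mul, mul_ite, ite_mul, mul_zero, zero_mul, mul_one, one_mul,
    Finset.sum_sub_distrib, Finset.sum_ite_irrel, Finset.sum_const_zero,
    Finset.sum_ite_eq, Finset.sum_ite_eq', Finset.mem_univ, if_true]

lemma trace_R (d : ℕ) (hd : 2 ≤ d) (x y : Fin d) :
    ∑ a : Fin d, wernerLocalR d (a, x) (a, y) = (1/2 : ℂ) * projQubit d x y := by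
  simp only [R_entry]
  have h2 : ∑ a : Fin d, projQubit d x a * projQubit d a y = projQubit d x y :=
    projQubit_mul d x y
  calc ∑ a : Fin d, (1/2 : ℂ) * (projQubit d a a * projQubit d x y
            - projQubit d x a * projQubit d a y)
      = (1/2 : ℂ) * ((∑ a : Fin d, projQubit d a a) * projQubit d x y
            - ∑ a : Fin d, projQubit d x a * projQubit d a y) := by
        rw [Finset.sum_mul, ← Finset.sum_sub_distrib, Finset.mul_sum]
    _ = (1/2 : ℂ) * projQubit d x y := by rw [projQubit_trace d hd, h2]; ring

lemma KsK_entry (d : ℕ) (x1 x2 y1 y2 : Fin d) :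
    ((projQubit d ⊗ₖ projQubit d) * swapOp d * (projQubit d ⊗ₖ projQubit d))
      (x1, x2) (y1, y2) = projQubit d x1 y2 * projQubit d x2 y1 := by
  simp only [Matrix.mul_apply, swapOp, Matrix.of_apply, Matrix.kroneckerMap_apply,
    Fintype.sum_prod_type]
  simp only [ite_and, mul_ite, ite_mul, mul_zero, zero_mul, mul_one, one_mul,
    Finset.sum_ite_irrel, Finset.sum_const_zero,
    Finset.sum_ite_eq, Finset.sum_ite_eq', Finset.mem_univ, if_true]
  calc ∑ c : Fin d, ∑ c' : Fin d, projQubit d x1 c' * projQubit d x2 c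
          * (projQubit d c y1 * projQubit d c' y2)
      = (∑ c : Fin d, projQubit d x2 c * projQubit d c y1)
          * (∑ c' : Fin d, projQubit d x1 c' * projQubit d c' y2) := by
        rw [Finset.sum_mul_sum]
        exact Finset.sum_congr rfl fun c _ => Finset.sum_congr rfl fun c' _ => by ring
    _ = projQubit d x2 y1 * projQubit d x1 y2 := by rw [projQubit_mul, projQubit_mul]
    _ = projQubit d x1 y2 * projQubit d x2 y1 := mul_comm _ _

lemma hT1 (d : ℕ) (hd : 2 ≤ d) :
    ∑ a : Fin d, ∑ b : Fin d, projQubit d a b * projQubit d b a = 2 := by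
  calc ∑ a : Fin d, ∑ b : Fin d, projQubit d a b * projQubit d b a
      = ∑ a : Fin d, projQubit d a a := Finset.sum_congr rfl fun a _ => projQubit_mul d a a
    _ = 2 := projQubit_trace d hd

lemma hT2 (d : ℕ) (u v : Fin d) :
    ∑ a : Fin d, ∑ b : Fin d, projQubit d u a * (projQubit d a b * projQubit d b v)
      = projQubit d u v := by
  simp only [← Finset.mul_sum, projQubit_mul]

lemma hT3 (d : ℕ) (u v : Fin d) :
    ∑ a : Fin d, ∑ b : Fin d, projQubit d u b * (projQubit d b a * projQubit d a v)
      = projQubit d u v := by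
  calc ∑ a : Fin d, ∑ b : Fin d, projQubit d u b * (projQubit d b a * projQubit d a v)
      = ∑ a : Fin d, (∑ b : Fin d, projQubit d u b * projQubit d b a) * projQubit d a v := by
        refine Finset.sum_congr rfl fun a _ => ?_
        rw [Finset.sum_mul]
        exact Finset.sum_congr rfl fun b _ => by ring
    _ = ∑ a : Fin d, projQubit d u a * projQubit d a v := by simp only [projQubit_mul]
    _ = projQubit d u v := projQubit_mul d u v

lemma hT4 (d : ℕ) (x1 x2 y1 y2 : Fin d) :
    ∑ a : Fin d, ∑ b : Fin d,
        (projQubit d x1 b * projQubit d b y2) * (projQubit d x2 a * projQubit d a y1)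
      = projQubit d x1 y2 * projQubit d x2 y1 := by
  calc ∑ a : Fin d, ∑ b : Fin d,
        (projQubit d x1 b * projQubit d b y2) * (projQubit d x2 a * projQubit d a y1)
      = ∑ a : Fin d, (∑ b : Fin d, projQubit d x1 b * projQubit d b y2)
          * (projQubit d x2 a * projQubit d a y1) :=
        Finset.sum_congr rfl fun a _ => (Finset.sum_mul _ _ _).symm
    _ = (∑ b : Fin d, projQubit d x1 b * projQubit d b y2)
          * ∑ a : Fin d, projQubit d x2 a * projQubit d a y1 := (Finset.mul_sum _ _ _).symm
    _ = projQubit d x1 y2 * projQubit d x2 y1 := by rw [projQubit_mul, projQubit_mul]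

lemma contrId (d : ℕ) (hd : 2 ≤ d) (x1 x2 y1 y2 : Fin d) :
    ∑ a1 : Fin d, ∑ b1 : Fin d, ∑ a1' : Fin d, ∑ b1' : Fin d,
        wernerLocalR d (a1, x1) (a1', y1) * wernerLocalR d (b1, x2) (b1', y2)
          * ((if a1' = a1 then (1 : ℂ) else 0) * (if b1' = b1 then (1 : ℂ) else 0))
      = (1/4 : ℂ) * (projQubit d x1 y1 * projQubit d x2 y2) := by
  simp only [mul_ite, ite_mul, mul_one, one_mul, mul_zero, zero_mul,
    Finset.sum_ite_irrel, Finset.sum_const_zero,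
    Finset.sum_ite_eq, Finset.sum_ite_eq', Finset.mem_univ, if_true]
  calc ∑ a1 : Fin d, ∑ b1 : Fin d,
        wernerLocalR d (a1, x1) (a1, y1) * wernerLocalR d (b1, x2) (b1, y2)
      = (∑ a1 : Fin d, wernerLocalR d (a1, x1) (a1, y1))
          * ∑ b1 : Fin d, wernerLocalR d (b1, x2) (b1, y2) := by
        rw [Finset.sum_mul_sum]
    _ = (1/4 : ℂ) * (projQubit d x1 y1 * projQubit d x2 y2) := by
        rw [trace_R d hd, trace_R d hd]; ring

lemma contrSwap (d : ℕ) (hd : 2 ≤ d) (x1 x2 y1 y2 : Fin d) :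
    ∑ a1 : Fin d, ∑ b1 : Fin d, ∑ a1' : Fin d, ∑ b1' : Fin d,
        wernerLocalR d (a1, x1) (a1', y1) * wernerLocalR d (b1, x2) (b1', y2)
          * ((if a1' = b1 then (1 : ℂ) else 0) * (if b1' = a1 then (1 : ℂ) else 0))
      = (1/4 : ℂ) * (projQubit d x1 y2 * projQubit d x2 y1) := by
  simp only [mul_ite, ite_mul, mul_one, one_mul, mul_zero, zero_mul,
    Finset.sum_ite_irrel, Finset.sum_const_zero,
    Finset.sum_ite_eq, Finset.sum_ite_eq', Finset.mem_univ, if_true]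
  trans ((1/4 : ℂ) * ((∑ a : Fin d, ∑ b : Fin d, projQubit d a b * projQubit d b a)
      * (projQubit d x1 y1 * projQubit d x2 y2)
    - (∑ a : Fin d, ∑ b : Fin d, projQubit d x2 a * (projQubit d a b * projQubit d b y2))
      * projQubit d x1 y1
    - (∑ a : Fin d, ∑ b : Fin d, projQubit d x1 b * (projQubit d b a * projQubit d a y1))
      * projQubit d x2 y2
    + ∑ a : Fin d, ∑ b : Fin d,
        (projQubit d x1 b * projQubit d b y2) * (projQubit d x2 a * projQubit d a y1)))
  · simp only [R_entry, mul_sub, mul_add, sub_mul, add_mul, Finset.sum_mul, Finset.mul_sum,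
      ← Finset.sum_sub_distrib, ← Finset.sum_add_distrib]
    exact Finset.sum_congr rfl fun a _ => Finset.sum_congr rfl fun b _ => by ring
  · rw [hT1 d hd, hT2, hT3, hT4]; ring

lemma state_entry (d : ℕ) (p : ℝ) (u v w z : Fin d) :
    wernerState d p (u, v) (w, z)
      = ((p : ℂ) / ((d : ℂ) * ((d : ℂ) + 1) / 2)
            + (1 - (p : ℂ)) / ((d : ℂ) * ((d : ℂ) - 1) / 2)) / 2
          * ((if u = w then (1 : ℂ) else 0) * (if v = z then (1 : ℂ) else 0))
        + ((p : ℂ) / ((d : ℂ) * ((d : ℂ) + 1) / 2)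
            - (1 - (p : ℂ)) / ((d : ℂ) * ((d : ℂ) - 1) / 2)) / 2
          * ((if u = z then (1 : ℂ) else 0) * (if v = w then (1 : ℂ) else 0)) := by
  simp only [wernerState, symProj, asymProj, swapOp, Matrix.add_apply, Matrix.smul_apply,
    Matrix.sub_apply, Matrix.one_apply, Matrix.of_apply, Prod.mk.injEq, ite_and,
    smul_eq_mul]
  split_ifs <;> ring

end WernerAux

/-- The contraction maps a two-qudit Werner state to a two-qubit Werner-form operator
with the same mixing structure, up to a positive scalar and positive normalizations. -/
theorem werner_contraction_werner_form (d : ℕ) (hd : 2 ≤ d) :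
    ∃ (c ds' da' : ℝ), 0 < c ∧ 0 < ds' ∧ 0 < da' ∧
      ∀ p : ℝ, wernerContraction d p
        = (c : ℂ) • (((p : ℂ) / (ds' : ℂ)) • symProj2 d
          + ((1 - (p : ℂ)) / (da' : ℂ)) • asymProj2 d) := by
  have hd' : (2 : ℝ) ≤ (d : ℝ) := by exact_mod_cast hd
  refine ⟨1/4, (d : ℝ) * ((d : ℝ) + 1) / 2, (d : ℝ) * ((d : ℝ) - 1) / 2,
    by norm_num, by nlinarith, by nlinarith, ?_⟩
  intro p
  ext ⟨x1, x2⟩ ⟨y1, y2⟩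
  simp only [wernerContraction, Matrix.of_apply, Matrix.smul_apply, Matrix.add_apply,
    symProj2, asymProj2, Matrix.sub_apply, Matrix.kroneckerMap_apply, KsK_entry,
    smul_eq_mul]
  trans (((p : ℂ) / ((d : ℂ) * ((d : ℂ) + 1) / 2)
          + (1 - (p : ℂ)) / ((d : ℂ) * ((d : ℂ) - 1) / 2)) / 2
        * ((1/4 : ℂ) * (projQubit d x1 y1 * projQubit d x2 y2))
      + ((p : ℂ) / ((d : ℂ) * ((d : ℂ) + 1) / 2)
          - (1 - (p : ℂ)) / ((d : ℂ) * ((d : ℂ) - 1) / 2)) / 2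
        * ((1/4 : ℂ) * (projQubit d x1 y2 * projQubit d x2 y1)))
  · calc (∑ a1 : Fin d, ∑ b1 : Fin d, ∑ a1' : Fin d, ∑ b1' : Fin d,
          wernerLocalR d (a1, x1) (a1', y1) * wernerLocalR d (b1, x2) (b1', y2)
            * wernerState d p (a1', b1') (a1, b1))
        = ∑ a1 : Fin d, ∑ b1 : Fin d, ∑ a1' : Fin d, ∑ b1' : Fin d,
            (((p : ℂ) / ((d : ℂ) * ((d : ℂ) + 1) / 2)
                + (1 - (p : ℂ)) / ((d : ℂ) * ((d : ℂ) - 1) / 2)) / 2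
              * (wernerLocalR d (a1, x1) (a1', y1) * wernerLocalR d (b1, x2) (b1', y2)
                  * ((if a1' = a1 then (1 : ℂ) else 0) * (if b1' = b1 then (1 : ℂ) else 0)))
            + ((p : ℂ) / ((d : ℂ) * ((d : ℂ) + 1) / 2)
                - (1 - (p : ℂ)) / ((d : ℂ) * ((d : ℂ) - 1) / 2)) / 2
              * (wernerLocalR d (a1, x1) (a1', y1) * wernerLocalR d (b1, x2) (b1', y2)
                  * ((if a1' = b1 then (1 : ℂ) else 0) * (if b1' = a1 then (1 : ℂ) else 0)))) := by
          refine Finset.sum_congr rfl fun a1 _ => Finset.sum_congr rfl fun b1 _ =>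
            Finset.sum_congr rfl fun a1' _ => Finset.sum_congr rfl fun b1' _ => ?_
          rw [state_entry]; ring
      _ = ((p : ℂ) / ((d : ℂ) * ((d : ℂ) + 1) / 2)
              + (1 - (p : ℂ)) / ((d : ℂ) * ((d : ℂ) - 1) / 2)) / 2
            * ∑ a1 : Fin d, ∑ b1 : Fin d, ∑ a1' : Fin d, ∑ b1' : Fin d,
                wernerLocalR d (a1, x1) (a1', y1) * wernerLocalR d (b1, x2) (b1', y2)
                  * ((if a1' = a1 then (1 : ℂ) else 0) * (if b1' = b1 then (1 : ℂ) else 0))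
          + ((p : ℂ) / ((d : ℂ) * ((d : ℂ) + 1) / 2)
              - (1 - (p : ℂ)) / ((d : ℂ) * ((d : ℂ) - 1) / 2)) / 2
            * ∑ a1 : Fin d, ∑ b1 : Fin d, ∑ a1' : Fin d, ∑ b1' : Fin d,
                wernerLocalR d (a1, x1) (a1', y1) * wernerLocalR d (b1, x2) (b1', y2)
                  * ((if a1' = b1 then (1 : ℂ) else 0) * (if b1' = a1 then (1 : ℂ) else 0)) := by
          simp only [Finset.sum_add_distrib, ← Finset.mul_sum]
      _ = _ := by rw [contrId d hd x1 x2 y1 y2, contrSwap d hd x1 x2 y1 y2]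
  · push_cast
    ring
end

section
/- Let Λ be a positive map on d×d matrices (Λ(X) ⪰ 0 whenever X ⪰ 0) with adjoint Λ† defined by tr(Λ(X)Y) = tr(XΛ†(Y)). Then for every separable state ρ_AB = Σⱼ pⱼ ρⱼ⊗σⱼ on ℂ^d⊗ℂ^d, tr((Λ†⊗id)(η) · ρ_AB) ≥ 0, where η is the swap operator; i.e., W_Λ = (Λ†⊗id)(η) is an entanglement witness. -/
open Matrix Kronecker BigOperators
open scoped ComplexOrder

/-- The operator (Λ†⊗id)(η), where Λ† acts on the first tensor factor:
writing η = Σ_{a,c} E_{ac} ⊗ B^{ac}, this is Σ_{a,c} Λ†(E_{ac}) ⊗ B^{ac}. -/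
noncomputable def witOfMap (d : ℕ)
    (Λd : Matrix (Fin d) (Fin d) ℂ →ₗ[ℂ] Matrix (Fin d) (Fin d) ℂ) :
    Matrix (Fin d × Fin d) (Fin d × Fin d) ℂ :=
  Matrix.of fun x y => ∑ a : Fin d, ∑ c : Fin d,
    (Λd (Matrix.single a c 1)) x.1 y.1 * swapOp d (a, x.2) (c, y.2)

lemma witOfMap_eq (d : ℕ)
    (Λd : Matrix (Fin d) (Fin d) ℂ →ₗ[ℂ] Matrix (Fin d) (Fin d) ℂ) :
    witOfMap d Λd = ∑ a : Fin d, ∑ c : Fin d,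
      (Λd (Matrix.single a c 1)) ⊗ₖ (Matrix.single c a 1) := by
  ext x y
  simp only [witOfMap, swapOp, Matrix.of_apply, Matrix.sum_apply,
    Matrix.kroneckerMap_apply, Matrix.single, Matrix.of_apply]
  refine Finset.sum_congr rfl fun a _ => Finset.sum_congr rfl fun c _ => ?_
  congr 1
  by_cases h1 : a = y.2 <;> by_cases h2 : x.2 = c <;>
    simp [h1, h2, Ne.symm, eq_comm, and_comm]

lemma trace_sum_kron (d : ℕ) (A B : Fin d → Fin d → Matrix (Fin d) (Fin d) ℂ)
    (ρ σ : Matrix (Fin d) (Fin d) ℂ) :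
    Matrix.trace ((∑ a : Fin d, ∑ c : Fin d, (A a c) ⊗ₖ (B a c)) * (ρ ⊗ₖ σ)) =
    ∑ a : Fin d, ∑ c : Fin d,
      Matrix.trace (A a c * ρ) * Matrix.trace (B a c * σ) := by
  simp only [Finset.sum_mul, Matrix.trace_sum, ← Matrix.mul_kronecker_mul,
    Matrix.trace_kronecker]

lemma key (d : ℕ)
    (Λ Λd : Matrix (Fin d) (Fin d) ℂ →ₗ[ℂ] Matrix (Fin d) (Fin d) ℂ)
    (hadj : ∀ X Y : Matrix (Fin d) (Fin d) ℂ,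
      Matrix.trace (Λ X * Y) = Matrix.trace (X * Λd Y))
    (ρ σ : Matrix (Fin d) (Fin d) ℂ) :
    Matrix.trace (witOfMap d Λd * (ρ ⊗ₖ σ)) = Matrix.trace (Λ ρ * σ) := by
  rw [witOfMap_eq, trace_sum_kron]
  have h1 : ∀ a c : Fin d,
      Matrix.trace (Λd (Matrix.single a c 1) * ρ) = (Λ ρ) c a := by
    intro a c
    rw [Matrix.trace_mul_comm, ← hadj]
    simp [Matrix.trace, Matrix.mul_apply, Matrix.single, Matrix.diag, ite_and]
  have h2 : ∀ a c : Fin d,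
      Matrix.trace (Matrix.single c a 1 * σ) = σ a c := by
    intro a c
    simp [Matrix.trace, Matrix.mul_apply, Matrix.single, Matrix.diag, ite_and]
  simp_rw [h1, h2]
  rw [Matrix.trace, Finset.sum_comm]
  simp [Matrix.mul_apply, Matrix.diag]

lemma psd_trace_nonneg {n : Type*} [Fintype n] {A : Matrix n n ℂ} (hA : A.PosSemidef) :
    0 ≤ A.trace := by
  classical
  rw [Matrix.trace]
  apply Finset.sum_nonneg
  intro i _
  exact hA.diag_nonneg

lemma psd_trace_mul_nonneg {n : Type*} [Fintype n] [DecidableEq n]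
    {A B : Matrix n n ℂ} (hA : A.PosSemidef) (hB : B.PosSemidef) :
    0 ≤ (A * B).trace := by
  open scoped MatrixOrder in
  obtain ⟨C, rfl⟩ := CStarAlgebra.nonneg_iff_eq_star_mul_self.mp hB.nonneg
  have h1 : (C * A * Cᴴ).trace = (A * (star C * C)).trace := by
    rw [star_eq_conjTranspose, Matrix.trace_mul_comm, ← Matrix.mul_assoc, Matrix.trace_mul_comm]
  rw [← h1]
  exact psd_trace_nonneg (hA.mul_mul_conjTranspose_same C)

/-- If Λ is a positive map with adjoint Λ† (tr(Λ(X)Y) = tr(XΛ†(Y))), then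
W_Λ = (Λ†⊗id)(η) has nonnegative expectation value on every separable state:
it is an entanglement witness. -/
theorem positive_map_witness (d : ℕ)
    (Λ Λd : Matrix (Fin d) (Fin d) ℂ →ₗ[ℂ] Matrix (Fin d) (Fin d) ℂ)
    (hΛpos : ∀ X : Matrix (Fin d) (Fin d) ℂ, X.PosSemidef → (Λ X).PosSemidef)
    (hadj : ∀ X Y : Matrix (Fin d) (Fin d) ℂ,
      Matrix.trace (Λ X * Y) = Matrix.trace (X * Λd Y))
    {J : Type*} [Fintype J] (p : J → ℝ) (hp : ∀ j, 0 ≤ p j)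
    (ρ σ : J → Matrix (Fin d) (Fin d) ℂ)
    (hρ : ∀ j, (ρ j).PosSemidef) (hσ : ∀ j, (σ j).PosSemidef) :
    0 ≤ Matrix.trace (witOfMap d Λd * ∑ j, (p j : ℂ) • (ρ j ⊗ₖ σ j)) := by
  rw [Matrix.mul_sum, Matrix.trace_sum]
  apply Finset.sum_nonneg
  intro j _
  rw [Matrix.mul_smul, Matrix.trace_smul, key d Λ Λd hadj]
  exact smul_nonneg (by exact_mod_cast hp j)
    (psd_trace_mul_nonneg (hΛpos _ (hρ j)) (hσ j))
end
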